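/- If G is a graph in which every connected component has at most k vertices, then G is proportionally k-choosable; i.e., χ_pc(G) ≤ k. -/

import Mathlib

open Finset

/-- The multiplicity of a color `c` in a list assignment `L`: the number of
vertices whose list contains `c`. -/
def eta {V : Type*} [Fintype V] (L : V → Finset ℕ) (c : ℕ) : ℕ :=
  (Finset.univ.filter fun v => c ∈ L v).card

/-- `f` is a proportional `L`-coloring of `G` (with lists of size `k`): a proper
`L`-coloring in which each color `c` of the palette is used `⌊η(c)/k⌋` or `⌈η(c)/k⌉` times. -/
def IsProportionalColoring {V : Type*} [Fintype V] (G : SimpleGraph V) (k : ℕ)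
    (L : V → Finset ℕ) (f : V → ℕ) : Prop :=
  (∀ v, f v ∈ L v) ∧ (∀ u v, G.Adj u v → f u ≠ f v) ∧
  ∀ c, (∃ v, c ∈ L v) →
    (Finset.univ.filter fun v => f v = c).card = eta L c / k ∨
    (Finset.univ.filter fun v => f v = c).card = (eta L c + k - 1) / k

/-- `G` is proportionally `k`-choosable: every `k`-assignment admits a proportional coloring. -/
def ProportionallyChoosable {V : Type*} [Fintype V] (G : SimpleGraph V) (k : ℕ) : Prop :=
  ∀ L : V → Finset ℕ, (∀ v, (L v).card = k) → ∃ f : V → ℕ, IsProportionalColoring G k L f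

/-!
Match each vertex `v` to a slot `(C, c)`, where `C` is the component of `v` and `c ∈ L v`, with
different vertices getting different slots; colouring `v` by `c` is then proper. Let `d c` be the
number of components meeting a list that contains `c`. Besides the vertices, `d c - ⌊η(c)/k⌋`
blockers of colour `c` compete for the slots of colour `c`, but the last `⌈η(c)/k⌉ - ⌊η(c)/k⌋` of
them may instead take one of `s = |V| - Σ ⌊η(c)/k⌋` parking places. Once every vertex and blocker
is matched, colour `c` is used at most `⌊η(c)/k⌋ + p c` times, `p c` being the number of parked
blockers of colour `c`. These bounds add up to at most `|V|`, so all of them are attained, and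
`p c ≤ ⌈η(c)/k⌉ - ⌊η(c)/k⌋ ≤ 1` makes the colouring proportional.

Hall's condition is checked colour by colour: weight `1/k` on each pair `(v, c ∈ L v)` is a
fractional matching, since a slot `(C, c)` is wanted by at most `|C| ≤ k` vertices, and the
remainders `η(c) mod k` of the colours sum to `k s`.
-/

theorem Nat.ceilDiv_le_div_add_one {k : ℕ} (hk : 0 < k) (n : ℕ) : n ⌈/⌉ k ≤ n / k + 1 :=
  (ceilDiv_le_iff_le_mul hk).2 (Nat.lt_mul_div_succ n hk).le

theorem Finset.exists_injOn_of_forall_card_le_card_biUnion {ι α : Type*} [DecidableEq α]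
    [Nonempty α] {s : Finset ι} {t : ι → Finset α} (h : ∀ A ⊆ s, #A ≤ #(A.biUnion t)) :
    ∃ g : ι → α, Set.InjOn g s ∧ ∀ x ∈ s, g x ∈ t x := by
  classical
  obtain ⟨g, hg_inj, hg_mem⟩ :=
    (all_card_le_biUnion_card_iff_exists_injective fun x : s => t x).1 fun A => by
      have := h (A.map (Function.Embedding.subtype _)) fun x hx => by
        obtain ⟨y, -, rfl⟩ := mem_map.1 hx
        exact y.2
      rwa [card_map, map_eq_image, image_biUnion] at this
  refine ⟨fun x => if hx : x ∈ s then g ⟨x, hx⟩ else Classical.arbitrary α, ?_, ?_⟩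
  · intro x hx y hy hxy
    simp only [dif_pos (mem_coe.1 hx), dif_pos (mem_coe.1 hy)] at hxy
    simpa using hg_inj hxy
  · intro x hx
    simpa [dif_pos hx] using hg_mem ⟨x, hx⟩

theorem Finset.card_filter_fst_eq_le {α β : Type*} [DecidableEq α] {R : Finset (α × β)} {a : α}
    {s : Finset β} (h : ∀ p ∈ R, p.1 = a → p.2 ∈ s) : #{p ∈ R | p.1 = a} ≤ #s := by
  refine card_le_card_of_injOn Prod.snd (fun p hp => ?_) fun p hp q hq hpq => ?_
  · obtain ⟨hpR, hpa⟩ := mem_filter.1 hp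
    exact h p hpR hpa
  · exact Prod.ext ((mem_filter.1 hp).2.trans (mem_filter.1 hq).2.symm) hpq

namespace ProportionalColoring

open scoped Classical

variable {V : Type*} [Fintype V] {G : SimpleGraph V} {k : ℕ}

theorem card_le_mul_card_image_connectedComponentMk
    (hcomp : ∀ v : V, {u : V | G.Reachable u v}.ncard ≤ k) (s : Finset V) :
    #s ≤ k * #(s.image G.connectedComponentMk) := by
  refine card_le_mul_card_image s k fun C hC => ?_
  obtain ⟨v, -, rfl⟩ := mem_image.1 hC
  calc #{u ∈ s | G.connectedComponentMk u = G.connectedComponentMk v}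
      ≤ {u : V | G.Reachable u v}.ncard := by
        rw [← Set.ncard_coe_finset]
        exact Set.ncard_le_ncard
          (fun u hu => SimpleGraph.ConnectedComponent.eq.1 (mem_filter.1 hu).2) (Set.toFinite _)
    _ ≤ k := hcomp v

variable (G k) (L : V → Finset ℕ)

noncomputable def palette : Finset ℕ := univ.biUnion L

noncomputable def componentsWith (c : ℕ) : Finset G.ConnectedComponent :=
  (univ.filter fun v => c ∈ L v).image G.connectedComponentMk

noncomputable def surplus : ℕ := Fintype.card V - ∑ c ∈ palette L, eta L c / k

noncomputable def blockers : Finset (ℕ × ℕ) :=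
  (palette L).biUnion fun c => (range (#(componentsWith G L c) - eta L c / k)).image (c, ·)

noncomputable def agents : Finset (V ⊕ (ℕ × ℕ)) := univ.disjSum (blockers G k L)

noncomputable def Parkable (p : ℕ × ℕ) : Prop :=
  #(componentsWith G L p.1) - eta L p.1 ⌈/⌉ k ≤ p.2

/-- Agents `inl v` (vertices) and `inr p` (blockers) are matched to slots `inl (C, c)` or to
parking places `inr j`, `j < surplus k L`. -/
noncomputable def admissible : V ⊕ (ℕ × ℕ) → Finset ((G.ConnectedComponent × ℕ) ⊕ ℕ)
  | .inl v => ({G.connectedComponentMk v} ×ˢ L v).disjSum ∅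
  | .inr p => (componentsWith G L p.1 ×ˢ {p.1}).disjSum
      (if Parkable G k L p then range (surplus k L) else ∅)

variable {G k L}

theorem mem_palette {c : ℕ} : c ∈ palette L ↔ ∃ v, c ∈ L v := by simp [palette]

theorem eta_le_mul_card_componentsWith (hcomp : ∀ v : V, {u : V | G.Reachable u v}.ncard ≤ k)
    (c : ℕ) : eta L c ≤ k * #(componentsWith G L c) :=
  card_le_mul_card_image_connectedComponentMk hcomp _

theorem ceilDiv_le_card_componentsWith (hk : 0 < k)
    (hcomp : ∀ v : V, {u : V | G.Reachable u v}.ncard ≤ k) (c : ℕ) :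
    eta L c ⌈/⌉ k ≤ #(componentsWith G L c) :=
  (ceilDiv_le_iff_le_mul hk).2 (eta_le_mul_card_componentsWith hcomp c)

theorem sum_card_filter_mem_eq (s : Finset V) :
    ∑ c ∈ palette L, #{v ∈ s | c ∈ L v} = ∑ v ∈ s, #(L v) := by
  simp only [card_filter]
  rw [sum_comm]
  refine sum_congr rfl fun v _ => ?_
  rw [← card_filter, filter_mem_eq_inter, inter_eq_right.2]
  exact fun c hc => mem_palette.2 ⟨v, hc⟩

theorem mul_sum_div_add_sum_mod (hL : ∀ v, #(L v) = k) :
    k * ∑ c ∈ palette L, eta L c / k + ∑ c ∈ palette L, eta L c % k = k * Fintype.card V := by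
  rw [mul_sum, ← sum_add_distrib]
  simp only [Nat.div_add_mod]
  simpa [eta, hL, mul_comm] using sum_card_filter_mem_eq (L := L) univ

theorem sum_div_add_surplus (hk : 0 < k) (hL : ∀ v, #(L v) = k) :
    ∑ c ∈ palette L, eta L c / k + surplus k L = Fintype.card V := by
  refine Nat.add_sub_cancel' (Nat.le_of_mul_le_mul_left ?_ hk)
  have := mul_sum_div_add_sum_mod hL
  omega

theorem sum_mod_eq_mul_surplus (hk : 0 < k) (hL : ∀ v, #(L v) = k) :
    ∑ c ∈ palette L, eta L c % k = k * surplus k L := by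
  have h₁ := mul_sum_div_add_sum_mod hL
  have h₂ := congrArg (k * ·) (sum_div_add_surplus hk hL)
  simp only [mul_add] at h₂
  omega

theorem mem_blockers {p : ℕ × ℕ} :
    p ∈ blockers G k L ↔ p.2 < #(componentsWith G L p.1) - eta L p.1 / k := by
  obtain ⟨c, i⟩ := p
  simp only [blockers, mem_biUnion, mem_image, mem_range, Prod.mk.injEq]
  constructor
  · rintro ⟨c, -, i, hi, rfl, rfl⟩
    exact hi
  · intro hi
    obtain ⟨C, hC⟩ := card_pos.1 ((Nat.zero_le i).trans_lt (hi.trans_le (Nat.sub_le _ _)))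
    obtain ⟨v, hv, -⟩ := mem_image.1 hC
    exact ⟨c, mem_palette.2 ⟨v, (mem_filter.1 hv).2⟩, i, hi, rfl, rfl⟩

theorem fst_mem_palette_of_mem_blockers {p : ℕ × ℕ} (hp : p ∈ blockers G k L) :
    p.1 ∈ palette L := by
  obtain ⟨c, hc, hp⟩ := mem_biUnion.1 hp
  obtain ⟨i, -, rfl⟩ := mem_image.1 hp
  exact hc

theorem card_filter_blockers (c : ℕ) :
    #{p ∈ blockers G k L | p.1 = c} = #(componentsWith G L c) - eta L c / k := by
  have : {p ∈ blockers G k L | p.1 = c} =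
      (range (#(componentsWith G L c) - eta L c / k)).image (c, ·) := by
    ext ⟨c', i⟩
    simp only [mem_filter, mem_blockers, mem_image, mem_range, Prod.mk.injEq]
    constructor
    · rintro ⟨hi, rfl⟩
      exact ⟨i, hi, rfl, rfl⟩
    · rintro ⟨i, hi, rfl, rfl⟩
      exact ⟨hi, rfl⟩
  rw [this, card_image_of_injective _ (Prod.mk_right_injective c), card_range]

theorem inl_mem_agents (v : V) : .inl v ∈ agents G k L := inl_mem_disjSum.2 (mem_univ v)

theorem inr_mem_agents {p : ℕ × ℕ} : .inr p ∈ agents G k L ↔ p ∈ blockers G k L :=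
  inr_mem_disjSum

section hall

variable (G L) in
noncomputable def neighborComponents (W : Finset V) (R : Finset (ℕ × ℕ)) (c : ℕ) :
    Finset G.ConnectedComponent :=
  if ∃ p ∈ R, p.1 = c then componentsWith G L c
  else {v ∈ W | c ∈ L v}.image G.connectedComponentMk

theorem card_filter_add_mul_card_filter_le (hk : 0 < k)
    (hcomp : ∀ v : V, {u : V | G.Reachable u v}.ncard ≤ k) {W : Finset V}
    {R : Finset (ℕ × ℕ)} (hR : R ⊆ blockers G k L) (c : ℕ) :
    #{v ∈ W | c ∈ L v} + k * #{p ∈ R | p.1 = c} ≤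
      k * #(neighborComponents G L W R c) +
        if ∃ p ∈ R, p.1 = c ∧ Parkable G k L p then eta L c % k else 0 := by
  have hWη : #{v ∈ W | c ∈ L v} ≤ eta L c :=
    card_le_card fun v hv => mem_filter.2 ⟨mem_univ v, (mem_filter.1 hv).2⟩
  have hEd := ceilDiv_le_card_componentsWith (L := L) hk hcomp c
  have hηE : eta L c ≤ k * (eta L c ⌈/⌉ k) := le_smul_ceilDiv hk
  have hFE : eta L c / k ≤ eta L c ⌈/⌉ k := by
    simpa using floorDiv_le_ceilDiv (a := k) (b := eta L c)
  have hηF := Nat.div_add_mod (eta L c) k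
  have hRF : #{p ∈ R | p.1 = c} ≤ #(componentsWith G L c) - eta L c / k := by
    simpa using card_filter_fst_eq_le (s := range _) fun p hp hpc =>
      mem_range.2 (hpc ▸ mem_blockers.1 (hR hp))
  unfold neighborComponents
  split_ifs with hRc hpark hpark
  · have hkR := Nat.mul_le_mul_left k hRF
    have hkF := Nat.mul_le_mul_left k (hFE.trans hEd)
    rw [Nat.mul_sub] at hkR
    omega
  · have hRE : #{p ∈ R | p.1 = c} ≤ #(componentsWith G L c) - eta L c ⌈/⌉ k := by
      refine (card_filter_fst_eq_le (s := range _) fun p hp hpc => mem_range.2 ?_).trans_eq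
        (card_range _)
      exact not_le.1 fun h => hpark ⟨p, hp, hpc, by rwa [Parkable, hpc]⟩
    have hkR := Nat.mul_le_mul_left k hRE
    have hkE := Nat.mul_le_mul_left k hEd
    rw [Nat.mul_sub] at hkR
    omega
  · exact absurd (hpark.imp fun p hp => ⟨hp.1, hp.2.1⟩) hRc
  · have hR0 : {p ∈ R | p.1 = c} = ∅ := filter_eq_empty_iff.2 fun p hp hpc => hRc ⟨p, hp, hpc⟩
    simpa [hR0] using card_le_mul_card_image_connectedComponentMk hcomp {v ∈ W | c ∈ L v}

theorem sum_card_neighborComponents_add_le (A : Finset (V ⊕ (ℕ × ℕ))) :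
    ∑ c ∈ palette L, #(neighborComponents G L A.toLeft A.toRight c) +
        (if ∃ p ∈ A.toRight, Parkable G k L p then surplus k L else 0) ≤
      #(A.biUnion (admissible G k L)) := by
  set N := ((palette L).biUnion fun c =>
      neighborComponents G L A.toLeft A.toRight c ×ˢ {c}).disjSum
    (if ∃ p ∈ A.toRight, Parkable G k L p then range (surplus k L) else ∅)
  have hN : #N = ∑ c ∈ palette L, #(neighborComponents G L A.toLeft A.toRight c) +
      (if ∃ p ∈ A.toRight, Parkable G k L p then surplus k L else 0) := by
    rw [card_disjSum, card_biUnion]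
    · simp only [card_product, card_singleton, mul_one, apply_ite card, card_range, card_empty]
    · intro c _ c' _ hcc'
      simp only [Function.onFun, disjoint_left, mem_product, mem_singleton]
      exact fun q hq hq' => hcc' (hq.2.symm.trans hq'.2)
  refine hN ▸ card_le_card fun x hx => mem_biUnion.2 ?_
  rcases x with ⟨C, c⟩ | j
  · obtain ⟨c', hc', hCc⟩ := mem_biUnion.1 (inl_mem_disjSum.1 hx)
    obtain ⟨hC, rfl⟩ : C ∈ neighborComponents G L A.toLeft A.toRight c' ∧ c' = c := by
      simpa using hCc
    unfold neighborComponents at hC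
    split_ifs at hC with hR
    · obtain ⟨p, hp, rfl⟩ := hR
      exact ⟨.inr p, mem_toRight.1 hp, by simpa [admissible] using hC⟩
    · obtain ⟨v, hv, rfl⟩ := mem_image.1 hC
      obtain ⟨hvW, hcv⟩ := mem_filter.1 hv
      exact ⟨.inl v, mem_toLeft.1 hvW, by simpa [admissible] using hcv⟩
  · have hj := inr_mem_disjSum.1 hx
    split_ifs at hj with hpark
    · obtain ⟨p, hp, hpark⟩ := hpark
      exact ⟨.inr p, mem_toRight.1 hp, by simpa [admissible, hpark] using hj⟩
    · simp at hj

theorem card_le_card_biUnion_admissible (hk : 0 < k) (hL : ∀ v, #(L v) = k)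
    (hcomp : ∀ v : V, {u : V | G.Reachable u v}.ncard ≤ k) {A : Finset (V ⊕ (ℕ × ℕ))}
    (hA : A ⊆ agents G k L) : #A ≤ #(A.biUnion (admissible G k L)) := by
  set W := A.toLeft
  set R := A.toRight
  have hR : R ⊆ blockers G k L := fun p hp => inr_mem_agents.1 (hA (mem_toRight.1 hp))
  have hW : k * #W = ∑ c ∈ palette L, #{v ∈ W | c ∈ L v} := by
    simp [sum_card_filter_mem_eq, hL, mul_comm]
  have hRsum : #R = ∑ c ∈ palette L, #{p ∈ R | p.1 = c} :=
    card_eq_sum_card_fiberwise fun p hp => fst_mem_palette_of_mem_blockers (hR hp)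
  have hpark : (∑ c ∈ palette L,
      if ∃ p ∈ R, p.1 = c ∧ Parkable G k L p then eta L c % k else 0) ≤
      if ∃ p ∈ R, Parkable G k L p then k * surplus k L else 0 := by
    split_ifs with h
    · rw [← sum_mod_eq_mul_surplus hk hL]
      exact sum_le_sum fun c _ => by split_ifs <;> simp
    · refine (sum_eq_zero fun c _ => if_neg ?_).le
      exact fun ⟨p, hp, _, hpark⟩ => h ⟨p, hp, hpark⟩
  refine Nat.le_of_mul_le_mul_left ?_ hk
  calc k * #A = ∑ c ∈ palette L, (#{v ∈ W | c ∈ L v} + k * #{p ∈ R | p.1 = c}) := by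
        rw [← card_toLeft_add_card_toRight, mul_add, hW, hRsum, mul_sum, sum_add_distrib]
    _ ≤ ∑ c ∈ palette L, (k * #(neighborComponents G L W R c) +
          if ∃ p ∈ R, p.1 = c ∧ Parkable G k L p then eta L c % k else 0) :=
        sum_le_sum fun c _ => card_filter_add_mul_card_filter_le hk hcomp hR c
    _ ≤ k * ∑ c ∈ palette L, #(neighborComponents G L W R c) +
          if ∃ p ∈ R, Parkable G k L p then k * surplus k L else 0 := by
        rw [sum_add_distrib, ← mul_sum]
        exact Nat.add_le_add_left hpark _
    _ ≤ k * #(A.biUnion (admissible G k L)) := by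
        have := Nat.mul_le_mul_left k
          (sum_card_neighborComponents_add_le (G := G) (k := k) (L := L) A)
        rwa [mul_add, mul_ite, mul_zero] at this

theorem exists_injOn_admissible (hk : 0 < k) (hL : ∀ v, #(L v) = k)
    (hcomp : ∀ v : V, {u : V | G.Reachable u v}.ncard ≤ k) :
    ∃ g : V ⊕ (ℕ × ℕ) → (G.ConnectedComponent × ℕ) ⊕ ℕ,
      Set.InjOn g (agents G k L) ∧ ∀ x ∈ agents G k L, g x ∈ admissible G k L x :=
  exists_injOn_of_forall_card_le_card_biUnion fun _ hA =>
    card_le_card_biUnion_admissible hk hL hcomp hA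

end hall

section matching

def colorOf (g : V ⊕ (ℕ × ℕ) → (G.ConnectedComponent × ℕ) ⊕ ℕ) (v : V) : ℕ :=
  (g (.inl v)).elim Prod.snd fun _ => 0

variable (G k L) in
noncomputable def parked (g : V ⊕ (ℕ × ℕ) → (G.ConnectedComponent × ℕ) ⊕ ℕ) :
    Finset (ℕ × ℕ) :=
  {p ∈ blockers G k L | (g (.inr p)).isRight}

variable {g : V ⊕ (ℕ × ℕ) → (G.ConnectedComponent × ℕ) ⊕ ℕ}
  (hg_inj : Set.InjOn g (agents G k L))
  (hg_mem : ∀ x ∈ agents G k L, g x ∈ admissible G k L x)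

include hg_mem in
theorem apply_inl_eq (v : V) :
    g (.inl v) = .inl (G.connectedComponentMk v, colorOf g v) ∧ colorOf g v ∈ L v := by
  have hmem := hg_mem (.inl v) (inl_mem_agents v)
  rcases hv : g (.inl v) with ⟨C, c⟩ | j
  · rw [hv] at hmem
    simp only [admissible, inl_mem_disjSum, mem_product, mem_singleton] at hmem
    simp [colorOf, hv, hmem]
  · simp [hv, admissible] at hmem

include hg_mem in
theorem apply_inr_of_isLeft {p : ℕ × ℕ} (hp : p ∈ blockers G k L) (h : (g (.inr p)).isLeft) :
    ∃ C ∈ componentsWith G L p.1, g (.inr p) = .inl (C, p.1) := by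
  have hmem := hg_mem (.inr p) (inr_mem_agents.2 hp)
  rcases hv : g (.inr p) with ⟨C, c⟩ | j
  · rw [hv] at hmem
    simp only [admissible, inl_mem_disjSum, mem_product, mem_singleton] at hmem
    exact ⟨C, hmem.1, by rw [hmem.2]⟩
  · simp [hv] at h

include hg_mem in
theorem apply_inr_of_isRight {p : ℕ × ℕ} (hp : p ∈ blockers G k L) (h : (g (.inr p)).isRight) :
    Parkable G k L p ∧ ∃ j < surplus k L, g (.inr p) = .inr j := by
  have hmem := hg_mem (.inr p) (inr_mem_agents.2 hp)
  rcases hv : g (.inr p) with ⟨C, c⟩ | j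
  · simp [hv] at h
  · rw [hv] at hmem
    simp only [admissible, inr_mem_disjSum] at hmem
    split_ifs at hmem with hpark
    · exact ⟨hpark, j, mem_range.1 hmem, rfl⟩
    · simp at hmem

include hg_inj hg_mem in
theorem colorOf_ne_of_adj {u v : V} (huv : G.Adj u v) : colorOf g u ≠ colorOf g v := by
  intro h
  have hcomp : G.connectedComponentMk u = G.connectedComponentMk v :=
    SimpleGraph.ConnectedComponent.sound huv.reachable
  have hg : g (.inl u) = g (.inl v) := by
    rw [(apply_inl_eq hg_mem u).1, (apply_inl_eq hg_mem v).1, hcomp, h]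
  exact huv.ne (Sum.inl_injective (hg_inj (inl_mem_agents u) (inl_mem_agents v) hg))

include hg_inj hg_mem in
theorem card_parked_le : #(parked G k L g) ≤ surplus k L := by
  have hmaps : Set.MapsTo (fun p => g (.inr p)) (parked G k L g)
      ((range (surplus k L)).map .inr : Finset ((G.ConnectedComponent × ℕ) ⊕ ℕ)) :=
    fun p hp => by
      obtain ⟨hpB, hpR⟩ := mem_filter.1 hp
      obtain ⟨-, j, hj, hgj⟩ := apply_inr_of_isRight hg_mem hpB hpR
      simpa [hgj] using hj
  have hinj : Set.InjOn (fun p => g (.inr p)) (parked G k L g) := fun p hp q hq hpq =>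
    Sum.inr_injective <| hg_inj (inr_mem_agents.2 (mem_filter.1 hp).1)
      (inr_mem_agents.2 (mem_filter.1 hq).1) hpq
  simpa using card_le_card_of_injOn _ hmaps hinj

include hg_mem in
theorem card_filter_parked_le (c : ℕ) :
    #{p ∈ parked G k L g | p.1 = c} ≤ eta L c ⌈/⌉ k - eta L c / k := by
  refine (card_filter_fst_eq_le (s := Ico (#(componentsWith G L c) - eta L c ⌈/⌉ k)
    (#(componentsWith G L c) - eta L c / k)) fun p hp hpc => ?_).trans ?_
  · obtain ⟨hpB, hpR⟩ := mem_filter.1 hp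
    obtain ⟨hpark, -⟩ := apply_inr_of_isRight hg_mem hpB hpR
    subst hpc
    exact mem_Ico.2 ⟨hpark, mem_blockers.1 hpB⟩
  · rw [Nat.card_Ico]
    omega

include hg_inj hg_mem in
theorem card_filter_colorOf_le (c : ℕ) :
    #(univ.filter fun v => colorOf g v = c) ≤
      eta L c / k + #{p ∈ parked G k L g | p.1 = c} := by
  set S : Finset (V ⊕ (ℕ × ℕ)) := (univ.filter fun v => colorOf g v = c).disjSum
    {p ∈ blockers G k L | p.1 = c ∧ (g (.inr p)).isLeft}
  have hS : #S ≤ #(componentsWith G L c) := by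
    have hmaps : Set.MapsTo g S
        ((componentsWith G L c ×ˢ {c}).map .inl : Finset ((G.ConnectedComponent × ℕ) ⊕ ℕ)) := by
      rintro (v | p) hx
      · have hv := (mem_filter.1 (inl_mem_disjSum.1 hx)).2
        obtain ⟨hgv, hcv⟩ := apply_inl_eq hg_mem v
        rw [hv] at hgv hcv
        simpa [hgv, componentsWith] using ⟨v, hcv, SimpleGraph.Reachable.refl v⟩
      · obtain ⟨hpB, rfl, hpL⟩ := mem_filter.1 (inr_mem_disjSum.1 hx)
        obtain ⟨C, hC, hgp⟩ := apply_inr_of_isLeft hg_mem hpB hpL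
        simpa [hgp] using hC
    have hinj : Set.InjOn g S := hg_inj.mono fun x hx => by
      rcases x with v | p
      · exact inl_mem_agents v
      · exact inr_mem_agents.2 (mem_filter.1 (inr_mem_disjSum.1 hx)).1
    simpa using card_le_card_of_injOn g hmaps hinj
  have hsplit := card_filter_add_card_filter_not (s := {p ∈ blockers G k L | p.1 = c})
    (p := fun p => (g (.inr p)).isLeft)
  have hparked : {p ∈ {p ∈ blockers G k L | p.1 = c} | ¬(g (.inr p)).isLeft} =
      {p ∈ parked G k L g | p.1 = c} := by
    ext p
    simp [parked, and_comm, and_assoc]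
  rw [card_filter_blockers, filter_filter, hparked] at hsplit
  rw [card_disjSum] at hS
  omega

include hg_inj hg_mem in
theorem card_filter_colorOf_eq (hk : 0 < k) (hL : ∀ v, #(L v) = k) {c : ℕ}
    (hc : c ∈ palette L) :
    #(univ.filter fun v => colorOf g v = c) =
      eta L c / k + #{p ∈ parked G k L g | p.1 = c} := by
  have hle := fun c (_ : c ∈ palette L) => card_filter_colorOf_le hg_inj hg_mem c
  refine (sum_eq_sum_iff_of_le hle).1 (le_antisymm (sum_le_sum hle) ?_) c hc
  calc ∑ c ∈ palette L, (eta L c / k + #{p ∈ parked G k L g | p.1 = c})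
      = ∑ c ∈ palette L, eta L c / k + #(parked G k L g) := by
        rw [sum_add_distrib, card_eq_sum_card_fiberwise (s := parked G k L g) fun p hp =>
          fst_mem_palette_of_mem_blockers (mem_filter.1 hp).1]
    _ ≤ ∑ c ∈ palette L, eta L c / k + surplus k L :=
        Nat.add_le_add_left (card_parked_le hg_inj hg_mem) _
    _ = Fintype.card V := sum_div_add_surplus hk hL
    _ = ∑ c ∈ palette L, #(univ.filter fun v => colorOf g v = c) :=
        card_eq_sum_card_fiberwise fun v _ => mem_palette.2 ⟨v, (apply_inl_eq hg_mem v).2⟩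

end matching

theorem exists_isProportionalColoring (hk : 0 < k) (hL : ∀ v, #(L v) = k)
    (hcomp : ∀ v : V, {u : V | G.Reachable u v}.ncard ≤ k) :
    ∃ f, IsProportionalColoring G k L f := by
  obtain ⟨g, hg_inj, hg_mem⟩ := exists_injOn_admissible hk hL hcomp
  refine ⟨colorOf g, fun v => (apply_inl_eq hg_mem v).2,
    fun u v => colorOf_ne_of_adj hg_inj hg_mem, fun c hc => ?_⟩
  have hn := card_filter_colorOf_eq hg_inj hg_mem hk hL (mem_palette.2 hc)
  have hQ := card_filter_parked_le hg_mem c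
  have hE := Nat.ceilDiv_le_div_add_one hk (eta L c)
  rw [← Nat.ceilDiv_eq_add_pred_div]
  omega

end ProportionalColoring

theorem stmt_17 {V : Type*} [Fintype V] (G : SimpleGraph V) (k : ℕ)
    (hcomp : ∀ v : V, {u : V | G.Reachable u v}.ncard ≤ k) :
    ProportionallyChoosable G k := by
  intro L hL
  rcases isEmpty_or_nonempty V with hV | ⟨⟨v⟩⟩
  · exact ⟨fun _ => 0, isEmptyElim, fun u => isEmptyElim u, fun _ ⟨v, _⟩ => isEmptyElim v⟩
  · have hk : 0 < k :=
      ((Set.ncard_pos (Set.toFinite _)).2 ⟨v, SimpleGraph.Reachable.refl v⟩).trans_le (hcomp v)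
    exact ProportionalColoring.exists_isProportionalColoring hk hL hcomp
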